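/- Let M ∈ ℝ^{n×n}, let P ∈ ℝ^{n×n} be symmetric with P − I positive semidefinite, and let μ > 0 be such that P M + Mᵀ P + 2μ P is negative semidefinite. Then the matrix exponential satisfies |exp(Mt)| ≤ √|P| · e^{−μt} for all t ≥ 0, where |·| denotes the matrix operator norm induced by the Euclidean vector norm. -/

import Mathlib

open Matrix

/-- Operator norm of a matrix induced by the Euclidean vector norms. -/
noncomputable def opNorm {n m : ℕ} (A : Matrix (Fin n) (Fin m) ℝ) : ℝ :=
  ‖LinearMap.toContinuousLinearMap (Matrix.toEuclideanLin A)‖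

/-- `mexp A t = exp (t A)`, the matrix exponential. -/
noncomputable def mexp {n : ℕ} (A : Matrix (Fin n) (Fin n) ℝ) (t : ℝ) :
    Matrix (Fin n) (Fin n) ℝ :=
  NormedSpace.exp (t • A)

/-!
`V x = ⟪x, P x⟫` is a Lyapunov function for `u' = M u`: along `u s = exp (s M) x` the
hypothesis on `P M + Mᵀ P + 2 μ P` says `V' ≤ -2 μ V`, so `e^{2 μ t} V (u t)` is antitone and
`V (u t) ≤ e^{-2 μ t} V x ≤ e^{-2 μ t} ‖P‖ ‖x‖²`. Since `P ≥ I`, `‖u t‖² ≤ V (u t)`.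
-/

open RealInnerProductSpace
open NormedSpace (exp map_exp)

theorem antitone_exp_mul_of_hasDerivAt_le {f f' : ℝ → ℝ} {c : ℝ}
    (hf : ∀ s, HasDerivAt f (f' s) s) (hf' : ∀ s, f' s ≤ -c * f s) :
    Antitone fun s ↦ Real.exp (c * s) * f s := by
  refine antitone_of_hasDerivAt_nonpos (f' := fun s ↦ Real.exp (c * s) * (c * f s + f' s))
    (fun s ↦ ?_) fun s ↦ ?_
  · exact ((((hasDerivAt_id s).const_mul c).exp).mul (hf s)).congr_deriv
      (by simp only [id, mul_one]; ring)
  · exact mul_nonpos_of_nonneg_of_nonpos (Real.exp_nonneg _) (by linarith [hf' s])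

section Lyapunov

variable {E : Type*} [NormedAddCommGroup E] [InnerProductSpace ℝ E] [CompleteSpace E]

theorem hasDerivAt_inner_exp_smul_apply (L Q : E →L[ℝ] E) (x : E) (s : ℝ) :
    HasDerivAt (fun s ↦ ⟪exp (s • L) x, Q (exp (s • L) x)⟫)
      (⟪exp (s • L) x, Q (L (exp (s • L) x))⟫ + ⟪L (exp (s • L) x), Q (exp (s • L) x)⟫) s := by
  have hu : ∀ s : ℝ, HasDerivAt (fun s ↦ exp (s • L) x) (L (exp (s • L) x)) s := fun s ↦ by
    simpa using (hasDerivAt_exp_smul_const' L s).clm_apply (hasDerivAt_const s x)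
  exact (hu s).inner ℝ (Q.hasFDerivAt.comp_hasDerivAt s (hu s))

theorem norm_exp_smul_apply_le_of_lyapunov (L Q : E →L[ℝ] E) (μ : ℝ)
    (hQ : ∀ x, ‖x‖ ^ 2 ≤ ⟪x, Q x⟫)
    (hL : ∀ x, ⟪x, Q (L x)⟫ + ⟪L x, Q x⟫ ≤ -(2 * μ) * ⟪x, Q x⟫)
    {t : ℝ} (ht : 0 ≤ t) (x : E) :
    ‖exp (t • L) x‖ ≤ √‖Q‖ * Real.exp (-μ * t) * ‖x‖ := by
  set u := fun s : ℝ ↦ exp (s • L) x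
  have hdecay : Real.exp (2 * μ * t) * ⟪u t, Q (u t)⟫ ≤ ⟪x, Q x⟫ := by
    simpa [u] using antitone_exp_mul_of_hasDerivAt_le (hasDerivAt_inner_exp_smul_apply L Q x)
      (fun s ↦ hL (u s)) ht
  have hQx : ⟪x, Q x⟫ ≤ ‖Q‖ * ‖x‖ ^ 2 :=
    (real_inner_le_norm _ _).trans <| by nlinarith [Q.le_opNorm x, norm_nonneg x]
  have hexp : Real.exp (-μ * t) ^ 2 * Real.exp (2 * μ * t) = 1 := by
    rw [← Real.exp_nat_mul, ← Real.exp_add]; ring_nf; exact Real.exp_zero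
  refine (pow_le_pow_iff_left₀ (norm_nonneg _) (by positivity) two_ne_zero).1 ?_
  calc ‖u t‖ ^ 2 ≤ ⟪u t, Q (u t)⟫ := hQ _
    _ = Real.exp (-μ * t) ^ 2 * (Real.exp (2 * μ * t) * ⟪u t, Q (u t)⟫) := by
        rw [← mul_assoc, hexp, one_mul]
    _ ≤ Real.exp (-μ * t) ^ 2 * (‖Q‖ * ‖x‖ ^ 2) :=
        mul_le_mul_of_nonneg_left (hdecay.trans hQx) (by positivity)
    _ = (√‖Q‖ * Real.exp (-μ * t) * ‖x‖) ^ 2 := by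
        rw [mul_pow, mul_pow, Real.sq_sqrt (norm_nonneg _)]; ring

theorem norm_exp_smul_le_of_lyapunov (L Q : E →L[ℝ] E) (μ : ℝ)
    (hQ : ∀ x, ‖x‖ ^ 2 ≤ ⟪x, Q x⟫)
    (hL : ∀ x, ⟪x, Q (L x)⟫ + ⟪L x, Q x⟫ ≤ -(2 * μ) * ⟪x, Q x⟫)
    {t : ℝ} (ht : 0 ≤ t) :
    ‖exp (t • L)‖ ≤ √‖Q‖ * Real.exp (-μ * t) :=
  (exp (t • L)).opNorm_le_bound (by positivity)
    (norm_exp_smul_apply_le_of_lyapunov L Q μ hQ hL ht)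

end Lyapunov

section EuclideanMatrix

variable {ι : Type*} [Fintype ι] [DecidableEq ι]

theorem norm_sq_le_inner_toEuclideanCLM {P : Matrix ι ι ℝ}
    (hP : ∀ x : ι → ℝ, 0 ≤ x ⬝ᵥ ((P - 1) *ᵥ x)) (x : EuclideanSpace ℝ ι) :
    ‖x‖ ^ 2 ≤ ⟪x, toEuclideanCLM (𝕜 := ℝ) P x⟫ := by
  have hPx := hP x.ofLp
  rw [sub_mulVec, dotProduct_sub, one_mulVec, sub_nonneg] at hPx
  have hx := inner_toEuclideanCLM 1 x x
  rw [map_one, one_mulVec, one_apply_eq_self] at hx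
  rwa [inner_toEuclideanCLM, ← real_inner_self_eq_norm_sq, hx]

theorem inner_toEuclideanCLM_comp_add_le {M P : Matrix ι ι ℝ} {μ : ℝ}
    (h : ∀ x : ι → ℝ, x ⬝ᵥ ((P * M + Mᵀ * P + (2 * μ) • P) *ᵥ x) ≤ 0)
    (x : EuclideanSpace ℝ ι) :
    ⟪x, toEuclideanCLM (𝕜 := ℝ) P (toEuclideanCLM (𝕜 := ℝ) M x)⟫ +
        ⟪toEuclideanCLM (𝕜 := ℝ) M x, toEuclideanCLM (𝕜 := ℝ) P x⟫ ≤
      -(2 * μ) * ⟪x, toEuclideanCLM (𝕜 := ℝ) P x⟫ := by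
  have hx := h x.ofLp
  rw [add_mulVec, add_mulVec, dotProduct_add, dotProduct_add, smul_mulVec, dotProduct_smul,
    ← mulVec_mulVec, ← mulVec_mulVec, dotProduct_mulVec x.ofLp Mᵀ, vecMul_transpose,
    dotProduct_comm (M *ᵥ _), smul_eq_mul] at hx
  rw [real_inner_comm (toEuclideanCLM (𝕜 := ℝ) P x), inner_toEuclideanCLM, inner_toEuclideanCLM,
    inner_toEuclideanCLM, ofLp_toEuclideanCLM, ofLp_toEuclideanCLM]
  linarith

end EuclideanMatrix

theorem opNorm_eq_norm_toEuclideanCLM {n : ℕ} (A : Matrix (Fin n) (Fin n) ℝ) :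
    opNorm A = ‖toEuclideanCLM (𝕜 := ℝ) A‖ :=
  rfl

open scoped Matrix.Norms.L2Operator in
theorem toEuclideanCLM_mexp {n : ℕ} (A : Matrix (Fin n) (Fin n) ℝ) (t : ℝ) :
    toEuclideanCLM (𝕜 := ℝ) (mexp A t) = exp (t • toEuclideanCLM (𝕜 := ℝ) A) := by
  let := NormedAlgebra.restrictScalars ℚ ℝ (Matrix (Fin n) (Fin n) ℝ)
  rw [mexp, ← map_smul]
  -- for the L² operator norm on matrices, `toEuclideanCLM` is an isometry by definition
  exact map_exp _ (AddMonoidHomClass.continuous_of_bound _ 1 fun B ↦ (one_mul ‖B‖).symm.le) _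

theorem stmt_17 (n : ℕ) (M P : Matrix (Fin n) (Fin n) ℝ) (μ : ℝ)
    -- `P - I` is positive semidefinite
    (hPI : ∀ x : Fin n → ℝ, 0 ≤ x ⬝ᵥ ((P - 1) *ᵥ x))
    -- `P M + Mᵀ P + 2 μ P` is negative semidefinite
    (hLyap : ∀ x : Fin n → ℝ,
      x ⬝ᵥ ((P * M + M.transpose * P + (2 * μ) • P) *ᵥ x) ≤ 0) :
    ∀ t : ℝ, 0 ≤ t →
      opNorm (mexp M t) ≤ Real.sqrt (opNorm P) * Real.exp (-μ * t) := by
  intro t ht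
  rw [opNorm_eq_norm_toEuclideanCLM, toEuclideanCLM_mexp, opNorm_eq_norm_toEuclideanCLM]
  exact norm_exp_smul_le_of_lyapunov _ _ μ (norm_sq_le_inner_toEuclideanCLM hPI)
    (inner_toEuclideanCLM_comp_add_le hLyap) ht
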